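/- Let P be a reciprocal probability measure such that X_1 is P-a.s. equal to a constant. Then P is Markov: for all 0 ≤ s ≤ u ≤ 1 and bounded measurable f, E_P(f(X_u) | 𝒜_{[0,s]}) = E_P(f(X_u) | X_s), P-a.s. -/

import Mathlib

open MeasureTheory

noncomputable section

variable {Ω 𝒳 : Type*}

/-- σ-algebra generated by the canonical process on the time window `[s,u]`. -/
def window [MeasurableSpace 𝒳] (X : ℝ → Ω → 𝒳) (s u : ℝ) : MeasurableSpace Ω :=
  ⨆ r ∈ Set.Icc s u, MeasurableSpace.comap (X r) inferInstance

/-- σ-algebra generated by the position at time `t`. -/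
def at1 [MeasurableSpace 𝒳] (X : ℝ → Ω → 𝒳) (t : ℝ) : MeasurableSpace Ω :=
  MeasurableSpace.comap (X t) inferInstance

/-- σ-algebra generated by the pair of positions at times `s` and `u`. -/
def at2 [MeasurableSpace 𝒳] (X : ℝ → Ω → 𝒳) (s u : ℝ) : MeasurableSpace Ω :=
  MeasurableSpace.comap (fun ω => (X s ω, X u ω)) inferInstance

/-- Indicator function of an event, real-valued. -/
def ind (A : Set Ω) : Ω → ℝ := A.indicator (fun _ => 1)

/-- The two-sided (symmetric) Markov property: for every time `t ∈ [0,1]`, past and future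
events are conditionally independent given the present position `X t`. -/
def IsMarkov [MeasurableSpace Ω] [MeasurableSpace 𝒳]
    (X : ℝ → Ω → 𝒳) (P : Measure Ω) : Prop :=
  ∀ t ∈ Set.Icc (0:ℝ) 1, ∀ A B : Set Ω,
    MeasurableSet[window X 0 t] A → MeasurableSet[window X t 1] B →
    P[ind (A ∩ B) | at1 X t] =ᵐ[P] P[ind A | at1 X t] * P[ind B | at1 X t]

/-- The reciprocal property: for all `0 ≤ s ≤ u ≤ 1`, the events inside `[s,u]` and those
outside are conditionally independent given the pair `(X s, X u)`. -/
def IsReciprocal [MeasurableSpace Ω] [MeasurableSpace 𝒳]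
    (X : ℝ → Ω → 𝒳) (P : Measure Ω) : Prop :=
  ∀ s u : ℝ, 0 ≤ s → s ≤ u → u ≤ 1 → ∀ A B C : Set Ω,
    MeasurableSet[window X 0 s] A → MeasurableSet[window X s u] B →
    MeasurableSet[window X u 1] C →
    P[ind (A ∩ B ∩ C) | at2 X s u] =ᵐ[P]
      P[ind (A ∩ C) | at2 X s u] * P[ind B | at2 X s u]



/-!
Take `u = 1` in the reciprocal property: for events `B` of the window `[s, 1]`, conditioning on
the past `𝒜_{[0,s]}` together with `X 1` is the same as conditioning on `(X s, X 1)`. By linearity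
and `L¹`-continuity of conditional expectation this extends from indicators to `f (X u)`. Since
`X 1` is a.s. a constant `c`, the conditional expectation given `(X s, X 1)`, which is `h (X s, X 1)`
for some measurable `h`, equals `h (X s, c)` a.s., a function of `X s` alone; so it is also the
conditional expectation given `X s`. Projecting onto `𝒜_{[0,s]} ⊇ σ(X s)` gives the claim.
-/

open MeasureTheory

section CondExpComp

variable {β γ : Type*} [MeasurableSpace β] [MeasurableSpace γ] {m₁ m₂ mΩ : MeasurableSpace Ω}
  {P : Measure Ω} [IsFiniteMeasure P] {Y : Ω → β}

lemma condExpL1CLM_compMeasurePreserving_ae_eq (hm : m₁ ≤ mΩ) (hY : Measurable Y)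
    (g : β →₁[P.map Y] ℝ) :
    condExpL1CLM ℝ hm P (Lp.compMeasurePreserving Y ⟨hY, rfl⟩ g) =ᵐ[P] P[g ∘ Y | m₁] := by
  set T := Lp.compMeasurePreserving (p := 1) (E := ℝ) Y ⟨hY, rfl⟩ g
  have hT : condExpL1CLM ℝ hm P T = condExpL1CLM ℝ hm P ((L1.integrable_coeFn T).toL1 T) := by
    rw [Integrable.toL1_coeFn]
  rw [hT]
  exact (condExp_ae_eq_condExpL1CLM hm _).symm.trans
    (condExp_congr_ae (Lp.coeFn_compMeasurePreserving g _))

lemma isClosed_setOf_condExp_comp_ae_eq (hm₁ : m₁ ≤ mΩ) (hm₂ : m₂ ≤ mΩ) (hY : Measurable Y) :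
    IsClosed {g : β →₁[P.map Y] ℝ | P[g ∘ Y | m₁] =ᵐ[P] P[g ∘ Y | m₂]} := by
  have hcomp : Continuous (Lp.compMeasurePreserving (p := 1) (E := ℝ) (μ := P) Y ⟨hY, rfl⟩) :=
    (Lp.isometry_compMeasurePreserving _).continuous
  convert isClosed_eq ((condExpL1CLM ℝ hm₁ P).continuous.comp hcomp)
    ((condExpL1CLM ℝ hm₂ P).continuous.comp hcomp) using 1
  ext g
  simp only [Set.mem_ofPred_eq, Function.comp_apply]
  have e₁ := condExpL1CLM_compMeasurePreserving_ae_eq hm₁ hY g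
  have e₂ := condExpL1CLM_compMeasurePreserving_ae_eq hm₂ hY g
  refine ⟨fun h => Lp.ext (e₁.trans (h.trans e₂.symm)), fun h => ?_⟩
  rw [h] at e₁
  exact e₁.symm.trans e₂

lemma condExp_comp_ae_eq_of_forall_indicator (hm₁ : m₁ ≤ mΩ) (hm₂ : m₂ ≤ mΩ) (hY : Measurable Y)
    (h : ∀ S, MeasurableSet S → P[ind (Y ⁻¹' S) | m₁] =ᵐ[P] P[ind (Y ⁻¹' S) | m₂])
    {g : β → ℝ} (hg : Integrable g (P.map Y)) :
    P[g ∘ Y | m₁] =ᵐ[P] P[g ∘ Y | m₂] := by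
  refine Integrable.induction (P := fun g => P[g ∘ Y | m₁] =ᵐ[P] P[g ∘ Y | m₂]) ?indicator ?add
    (isClosed_setOf_condExp_comp_ae_eq hm₁ hm₂ hY) ?ae_congr hg
  case indicator =>
    intro b S hS _
    have hind : (S.indicator fun _ => b) ∘ Y = b • ind (Y ⁻¹' S) := by
      ext ω
      by_cases hω : Y ω ∈ S <;> simp [ind, Set.indicator, hω]
    rw [hind]
    exact (condExp_smul b _ _).trans <| ((h S hS).const_smul b).trans (condExp_smul b _ _).symm
  case add =>
    intro g₁ g₂ _ hg₁ hg₂ h₁ h₂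
    have hY' := hY.aemeasurable (μ := P)
    have hi₁ := (integrable_map_measure hg₁.aestronglyMeasurable hY').mp hg₁
    have hi₂ := (integrable_map_measure hg₂.aestronglyMeasurable hY').mp hg₂
    exact (condExp_add hi₁ hi₂ _).trans ((h₁.add h₂).trans (condExp_add hi₁ hi₂ _).symm)
  case ae_congr =>
    intro g₁ g₂ hfg _ h₁
    have hcomp := ae_eq_comp hY.aemeasurable hfg
    exact (condExp_congr_ae hcomp.symm).trans (h₁.trans (condExp_congr_ae hcomp))

lemma condExp_comap_prod_ae_eq_of_ae_const {Z : Ω → γ} {c : γ} (hY : Measurable Y)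
    (hZ : Measurable Z) (hc : ∀ᵐ ω ∂P, Z ω = c) (φ : Ω → ℝ) :
    P[φ | MeasurableSpace.comap (fun ω => (Y ω, Z ω)) inferInstance] =ᵐ[P]
      P[φ | MeasurableSpace.comap Y inferInstance] := by
  have hYZ : MeasurableSpace.comap (fun ω => (Y ω, Z ω)) inferInstance ≤ mΩ :=
    (hY.prodMk hZ).comap_le
  have hσ : MeasurableSpace.comap Y inferInstance ≤
      MeasurableSpace.comap (fun ω => (Y ω, Z ω)) (inferInstance : MeasurableSpace (β × γ)) :=
    (measurable_fst.comp (comap_measurable (fun ω => (Y ω, Z ω)))).comap_le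
  obtain ⟨h, hh, hφ⟩ := (stronglyMeasurable_condExp (f := φ) (μ := P)
    (m := MeasurableSpace.comap (fun ω => (Y ω, Z ω)) inferInstance)).exists_eq_measurable_comp
  have hφc : P[φ | MeasurableSpace.comap (fun ω => (Y ω, Z ω)) inferInstance] =ᵐ[P]
      fun ω => h (Y ω, c) := by
    filter_upwards [hc] with ω hω
    rw [hφ, Function.comp_apply, hω]
  have hmeas : StronglyMeasurable[MeasurableSpace.comap Y inferInstance] fun ω => h (Y ω, c) :=
    hh.comp_measurable ((comap_measurable Y).prodMk measurable_const)
  calc P[φ | MeasurableSpace.comap (fun ω => (Y ω, Z ω)) inferInstance]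
      =ᵐ[P] fun ω => h (Y ω, c) := hφc
    _ = P[fun ω => h (Y ω, c) | MeasurableSpace.comap Y inferInstance] :=
      (condExp_of_stronglyMeasurable hY.comap_le hmeas (integrable_condExp.congr hφc)).symm
    _ =ᵐ[P] P[P[φ | MeasurableSpace.comap (fun ω => (Y ω, Z ω)) inferInstance] |
        MeasurableSpace.comap Y inferInstance] := condExp_congr_ae hφc.symm
    _ =ᵐ[P] P[φ | MeasurableSpace.comap Y inferInstance] := condExp_condExp_of_le hσ hYZ

end CondExpComp

section Window

variable [MeasurableSpace 𝒳] {X : ℝ → Ω → 𝒳}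

lemma window_le [mΩ : MeasurableSpace Ω] (hX : ∀ t, Measurable (X t)) (a b : ℝ) :
    window X a b ≤ mΩ :=
  iSup₂_le fun r _ => (hX r).comap_le

lemma comap_le_window {a b r : ℝ} (hr : r ∈ Set.Icc a b) :
    MeasurableSpace.comap (X r) inferInstance ≤ window X a b :=
  le_biSup (f := fun r => MeasurableSpace.comap (X r) inferInstance) hr

end Window

/-- a reciprocal measure whose final position `X_1` is a.s. constant is Markov:
for all `0 ≤ s ≤ u ≤ 1` and bounded measurable `f`,
`E_P(f(X_u) | 𝒜_{[0,s]}) = E_P(f(X_u) | X_s)` a.s. -/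
theorem reciprocal_pinned_endpoint_is_markov
    [MeasurableSpace Ω] [MeasurableSpace 𝒳]
    (X : ℝ → Ω → 𝒳) (hX : ∀ t, Measurable (X t))
    (P : Measure Ω) [IsProbabilityMeasure P]
    (hrec : ∀ s u : ℝ, 0 ≤ s → s ≤ u → u ≤ 1 → ∀ B : Set Ω, MeasurableSet[window X s u] B →
      P[ind B | window X 0 s ⊔ window X u 1] =ᵐ[P] P[ind B | at2 X s u])
    (hconst : ∃ c : 𝒳, ∀ᵐ ω ∂P, X 1 ω = c) :
    ∀ s u : ℝ, 0 ≤ s → s ≤ u → u ≤ 1 → ∀ f : 𝒳 → ℝ, Measurable f → (∃ C, ∀ x, |f x| ≤ C) →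
      P[(fun ω => f (X u ω)) | window X 0 s] =ᵐ[P] P[(fun ω => f (X u ω)) | at1 X s] := by
  obtain ⟨c, hc⟩ := hconst
  rintro s u hs hsu hu f hf ⟨C, hC⟩
  have hXu : Measurable[window X s 1] (X u) :=
    measurable_iff_comap_le.2 (comap_le_window ⟨hsu, hu⟩)
  have hfi : Integrable f (P.map (X u)) :=
    .of_bound hf.aestronglyMeasurable C (.of_forall fun x => hC x)
  have hpast : window X 0 s ⊔ window X 1 1 ≤ ‹MeasurableSpace Ω› :=
    sup_le (window_le hX 0 s) (window_le hX 1 1)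
  have hrec₁ : P[f ∘ X u | window X 0 s ⊔ window X 1 1] =ᵐ[P] P[f ∘ X u | at2 X s 1] :=
    condExp_comp_ae_eq_of_forall_indicator hpast ((hX s).prodMk (hX 1)).comap_le (hX u)
      (fun S hS => hrec s 1 hs (hsu.trans hu) le_rfl _ (hXu hS)) hfi
  have hpin : P[f ∘ X u | at2 X s 1] =ᵐ[P] P[f ∘ X u | at1 X s] :=
    condExp_comap_prod_ae_eq_of_ae_const (hX s) (hX 1) hc _
  calc P[f ∘ X u | window X 0 s]
      =ᵐ[P] P[P[f ∘ X u | window X 0 s ⊔ window X 1 1] | window X 0 s] :=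
        (condExp_condExp_of_le le_sup_left hpast).symm
    _ =ᵐ[P] P[P[f ∘ X u | at1 X s] | window X 0 s] := condExp_congr_ae (hrec₁.trans hpin)
    _ = P[f ∘ X u | at1 X s] :=
        condExp_of_stronglyMeasurable (window_le hX 0 s)
          (stronglyMeasurable_condExp.mono (comap_le_window ⟨hs, le_rfl⟩)) integrable_condExp
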